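/- Let B be a simple bipartite graph with bipartition V(B) = W ⊎ U, G its half-square, D = (T, β_D) a nice tree decomposition of B, and D' = (T, β_{D'}) the derived decomposition of G. Then for every node t of T and every edge {u, v} of G with u ∈ γ_{D'}(t) and v ∈ V(G) ∖ γ_{D'}(t), either u ∈ Original(t), or there is a special clique K ∈ Cliques(t) with u, v ∈ K. -/

import Mathlib

open SimpleGraph

section Defs

variable {V : Type*} {ι : Type*}

/-- `W, U` is a bipartition of the simple graph `B`. -/
def IsBipartition (B : SimpleGraph V) (W U : Set V) : Prop :=
  (∀ v, v ∈ W ∨ v ∈ U) ∧ (∀ v, ¬(v ∈ W ∧ v ∈ U)) ∧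
    ∀ ⦃a b⦄, B.Adj a b → (a ∈ W ∧ b ∈ U) ∨ (a ∈ U ∧ b ∈ W)

/-- The half-square of `B` on side `W`: two distinct vertices of `W` are adjacent
iff they have a common neighbor in `B`. -/
def halfSquare (B : SimpleGraph V) (W : Set V) : SimpleGraph V where
  Adj a b := a ≠ b ∧ a ∈ W ∧ b ∈ W ∧ ∃ s, B.Adj a s ∧ B.Adj b s
  symm := by
    refine ⟨?_⟩
    rintro a b ⟨hne, ha, hb, s, h1, h2⟩
    exact ⟨hne.symm, hb, ha, s, h2, h1⟩
  loopless := by refine ⟨?_⟩; rintro a ⟨hne, _⟩; exact hne rfl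

/-- Tree decomposition of the graph `H` with vertex set `S`, over the tree `T`. -/
structure IsTreeDecompOn (H : SimpleGraph V) (S : Set V) (T : SimpleGraph ι)
    (β : ι → Set V) : Prop where
  covers : ∀ v ∈ S, ∃ t, v ∈ β t
  edge_mem : ∀ ⦃u v⦄, H.Adj u v → ∃ t, u ∈ β t ∧ v ∈ β t
  conn : ∀ v ∈ S, (T.induce {t | v ∈ β t}).Connected

/-- `t'` is a descendant of `t` (inclusively) in the tree `T` rooted at `r`:
`t` lies on every path from `t'` to the root. -/
def Desc (T : SimpleGraph ι) (r : ι) (t t' : ι) : Prop :=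
  ∀ p : T.Walk t' r, p.IsPath → t ∈ p.support

/-- `γ(t)`: union of the bags of `t` and of all its descendants. -/
def gammaSet (T : SimpleGraph ι) (r : ι) (β : ι → Set V) (t : ι) : Set V :=
  ⋃ t' ∈ {t' | Desc T r t t'}, β t'

/-- The bag of the derived decomposition. -/
def derivedBag (B : SimpleGraph V) (W U : Set V) (T : SimpleGraph ι) (r : ι)
    (β : ι → Set V) (t : ι) : Set V :=
  (β t ∩ W) ∪ ⋃ s ∈ β t ∩ U, B.neighborSet s ∩ gammaSet T r β t

def originalSet (B : SimpleGraph V) (W U : Set V) (T : SimpleGraph ι) (r : ι)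
    (β : ι → Set V) (t : ι) : Set V :=
  β t ∩ derivedBag B W U T r β t

def fakeSet (B : SimpleGraph V) (W U : Set V) (T : SimpleGraph ι) (r : ι)
    (β : ι → Set V) (t : ι) : Set V :=
  derivedBag B W U T r β t \ β t

def cliquesAt (B : SimpleGraph V) (U : Set V) (β : ι → Set V) (t : ι) : Set (Set V) :=
  {K | ∃ s ∈ β t ∩ U, K = B.neighborSet s}

def IsChild (T : SimpleGraph ι) (r : ι) (t t' : ι) : Prop :=
  T.Adj t t' ∧ Desc T r t t'

def IsLeafNode (T : SimpleGraph ι) (r : ι) (β : ι → Set V) (t : ι) : Prop :=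
  (∀ t', ¬ IsChild T r t t') ∧ β t = ∅

def IsForgetNode (T : SimpleGraph ι) (r : ι) (β : ι → Set V) (w : V) (t : ι) : Prop :=
  ∃ t', IsChild T r t t' ∧ (∀ t'', IsChild T r t t'' → t'' = t') ∧
    w ∈ β t' ∧ β t = β t' \ {w}

def IsIntroduceNode (T : SimpleGraph ι) (r : ι) (β : ι → Set V) (w : V) (t : ι) : Prop :=
  ∃ t', IsChild T r t t' ∧ (∀ t'', IsChild T r t t'' → t'' = t') ∧
    w ∈ β t ∧ β t \ {w} = β t'

def IsJoinNode (T : SimpleGraph ι) (r : ι) (β : ι → Set V) (t : ι) : Prop :=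
  ∃ t₁ t₂, t₁ ≠ t₂ ∧ IsChild T r t t₁ ∧ IsChild T r t t₂ ∧
    (∀ t'', IsChild T r t t'' → t'' = t₁ ∨ t'' = t₂) ∧ β t = β t₁ ∧ β t = β t₂

/-- A nice (rooted) tree decomposition. -/
def IsNice (T : SimpleGraph ι) (r : ι) (β : ι → Set V) : Prop :=
  β r = ∅ ∧ ∀ t, IsLeafNode T r β t ∨ (∃ w, IsForgetNode T r β w t) ∨
    (∃ w, IsIntroduceNode T r β w t) ∨ IsJoinNode T r β t

/-- `E(X)`: edges of `G` with both endpoints in `X`. -/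
def edgesIn (G : SimpleGraph V) (X : Set V) : Set (Sym2 V) :=
  {e | e ∈ G.edgeSet ∧ ∀ x ∈ e, x ∈ X}

end Defs

/-!
On `W` the derived `γ_{D'}(t)` agrees with `γ_D(t)`, and in general is contained in it. Let `s`
be a common neighbour of `u` and `v` in `B`. Some bag contains `v` and `s`; as `v ∉ γ_D(t)`, it
lies outside the subtree below `t`. The key fact is that a vertex lying in a bag below `t` and
in a bag outside that subtree lies in `β t`: the bags containing it form a connected subtree,
and every path from below `t` to the outside, continued to the root, passes through `t`. Take a
bag containing `u` and `s`. If it is below `t`, the key fact for `s` gives `N_B(s) ∈ Cliques(t)`;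
otherwise, since `u ∈ γ_D(t)`, the key fact for `u` gives `u ∈ Original(t)`.
-/

section HalfSquareDecomposition

variable {V : Type*} {ι : Type*}

lemma IsBipartition.mem_right_of_adj {B : SimpleGraph V} {W U : Set V}
    (hbip : IsBipartition B W U) {a b : V} (ha : a ∈ W) (hab : B.Adj a b) : b ∈ U := by
  rcases hbip.2.2 hab with ⟨_, hb⟩ | ⟨ha', _⟩
  · exact hb
  · exact absurd ⟨ha, ha'⟩ (hbip.2.1 a)

variable {T : SimpleGraph ι} {r : ι}

lemma Desc.trans {t t' t'' : ι} (h : Desc T r t t') (h' : Desc T r t' t'') :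
    Desc T r t t'' := by
  classical
  intro p hp
  have ht' := h' p hp
  exact Walk.support_dropUntil_subset_support p ht' (h _ (hp.dropUntil ht'))

lemma mem_gammaSet_iff {β : ι → Set V} {t : ι} {x : V} :
    x ∈ gammaSet T r β t ↔ ∃ t', Desc T r t t' ∧ x ∈ β t' := by
  simp [gammaSet]

lemma gammaSet_derivedBag_subset (B : SimpleGraph V) (W U : Set V) (β : ι → Set V) (t : ι) :
    gammaSet T r (derivedBag B W U T r β) t ⊆ gammaSet T r β t := by
  intro x hx
  obtain ⟨t', ht', hx'⟩ := mem_gammaSet_iff.mp hx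
  rcases hx' with ⟨hxβ, _⟩ | hx'
  · exact mem_gammaSet_iff.mpr ⟨t', ht', hxβ⟩
  · simp only [Set.mem_iUnion] at hx'
    obtain ⟨_, _, _, hxγ⟩ := hx'
    obtain ⟨t'', ht'', hxβ⟩ := mem_gammaSet_iff.mp hxγ
    exact mem_gammaSet_iff.mpr ⟨t'', ht'.trans ht'', hxβ⟩

lemma mem_gammaSet_derivedBag_of_mem_gammaSet (B : SimpleGraph V) {W : Set V} (U : Set V)
    {β : ι → Set V} {t : ι} {x : V} (hxW : x ∈ W) (hx : x ∈ gammaSet T r β t) :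
    x ∈ gammaSet T r (derivedBag B W U T r β) t := by
  obtain ⟨t', ht', hxβ⟩ := mem_gammaSet_iff.mp hx
  exact mem_gammaSet_iff.mpr ⟨t', ht', Or.inl ⟨hxβ, hxW⟩⟩

lemma mem_of_mem_gammaSet_of_not_desc {β : ι → Set V} {x : V} {t t₂ : ι}
    (hconn : (T.induce {t' | x ∈ β t'}).Connected) (hx : x ∈ gammaSet T r β t)
    (ht₂ : ¬ Desc T r t t₂) (hx₂ : x ∈ β t₂) : x ∈ β t := by
  classical
  obtain ⟨t₁, ht₁, hx₁⟩ := mem_gammaSet_iff.mp hx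
  obtain ⟨p, hp, htp⟩ : ∃ p : T.Walk t₂ r, p.IsPath ∧ t ∉ p.support := by
    simpa [Desc] using ht₂
  obtain ⟨w⟩ := hconn.preconnected ⟨t₁, hx₁⟩ ⟨t₂, hx₂⟩
  let q : T.Walk t₁ t₂ := w.map (Embedding.induce {t' | x ∈ β t'}).toHom
  have ht : t ∈ (q.append p).support :=
    (q.append p).support_bypass_subset_support (ht₁ _ (q.append p).bypass_isPath)
  rw [Walk.support_append] at ht
  rcases List.mem_append.mp ht with hq | hp'
  · rw [show q.support = _ from Walk.support_map _ _] at hq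
    obtain ⟨a, _, rfl⟩ := List.mem_map.mp hq
    exact a.2
  · exact absurd (List.mem_of_mem_tail hp') htp

end HalfSquareDecomposition

theorem stmt_5_general {V : Type*} {ι : Type*} (B : SimpleGraph V) (W U : Set V)
    (hbip : IsBipartition B W U)
    (T : SimpleGraph ι) (r : ι) (β : ι → Set V)
    (hD : IsTreeDecompOn B Set.univ T β)
    (t : ι) (u v : V) (hadj : (halfSquare B W).Adj u v)
    (hu : u ∈ gammaSet T r (derivedBag B W U T r β) t)
    (hv : v ∉ gammaSet T r (derivedBag B W U T r β) t) :
    u ∈ originalSet B W U T r β t ∨ ∃ K ∈ cliquesAt B U β t, u ∈ K ∧ v ∈ K := by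
  obtain ⟨-, huW, hvW, s, hus, hvs⟩ := hadj
  have huγ : u ∈ gammaSet T r β t := gammaSet_derivedBag_subset B W U β t hu
  obtain ⟨tv, hvβ, hsβv⟩ := hD.edge_mem hvs
  have htv : ¬ Desc T r t tv := fun h =>
    hv (mem_gammaSet_derivedBag_of_mem_gammaSet B U hvW (mem_gammaSet_iff.mpr ⟨tv, h, hvβ⟩))
  obtain ⟨tu, huβ, hsβu⟩ := hD.edge_mem hus
  by_cases htu : Desc T r t tu
  · have hst : s ∈ β t := mem_of_mem_gammaSet_of_not_desc (hD.conn s trivial)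
      (mem_gammaSet_iff.mpr ⟨tu, htu, hsβu⟩) htv hsβv
    exact Or.inr ⟨B.neighborSet s, ⟨s, ⟨hst, hbip.mem_right_of_adj huW hus⟩, rfl⟩,
      hus.symm, hvs.symm⟩
  · have hut : u ∈ β t := mem_of_mem_gammaSet_of_not_desc (hD.conn u trivial) huγ htu huβ
    exact Or.inl ⟨hut, Or.inl ⟨hut, huW⟩⟩

/-- every edge `{u, v}` of `G` with `u ∈ γ_{D'}(t)` and
`v ∈ V(G) ∖ γ_{D'}(t)` either has `u ∈ Original(t)`, or lies inside some special
clique `K ∈ Cliques(t)`. -/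
theorem stmt_5 {V : Type*} {ι : Type*} (B : SimpleGraph V) (W U : Set V)
    (hbip : IsBipartition B W U)
    (T : SimpleGraph ι) (r : ι) (hT : T.IsTree) (β : ι → Set V)
    (hD : IsTreeDecompOn B Set.univ T β) (hnice : IsNice T r β)
    (t : ι) (u v : V) (hadj : (halfSquare B W).Adj u v)
    (hu : u ∈ gammaSet T r (derivedBag B W U T r β) t)
    (hv : v ∉ gammaSet T r (derivedBag B W U T r β) t) :
    u ∈ originalSet B W U T r β t ∨ ∃ K ∈ cliquesAt B U β t, u ∈ K ∧ v ∈ K :=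
  stmt_5_general B W U hbip T r β hD t u v hadj hu hv
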